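/- Let W_1, ..., W_T be adapted to a filtration (F_t) with 0 ≤ W_t ≤ 1 a.s., and fix η ∈ (0,1]. Then the process Π_{t=1}^T exp(−η W_t + (1 − e^{−η}) E[W_t | F_{t−1}]) has expectation at most 1. -/

import Mathlib

/-!
Write `c = 1 - exp (-η)` and `E_t = μ[W t | ℱ (t - 1)]`. Convexity gives
`exp (-η x) ≤ 1 - c x` on `[0, 1]`, so given `ℱ (t - 1)` the conditional expectation of
`exp (-η W t)` is at most `1 - c E_t ≤ exp (-c E_t)`. Hence every factor of the product has
conditional expectation at most `1` given the past, the partial products form a supermartingale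
starting at `1`, and their expectations stay below `1`.
-/

open MeasureTheory Real Finset

lemma Real.exp_neg_mul_le_one_sub_mul (η : ℝ) {x : ℝ} (hx : x ∈ Set.Icc (0 : ℝ) 1) :
    exp (-η * x) ≤ 1 - (1 - exp (-η)) * x := by
  have h := convexOn_exp.2 (Set.mem_univ 0) (Set.mem_univ (-η)) (sub_nonneg.2 hx.2) hx.1
    (sub_add_cancel 1 x)
  simp only [smul_eq_mul, mul_zero, zero_add, exp_zero, mul_one, mul_comm x] at h
  linarith

lemma neg_mul_add_mul_le_abs_add_abs {a b x y : ℝ} (hx : |x| ≤ 1) (hy : |y| ≤ 1) :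
    -a * x + b * y ≤ |a| + |b| :=
  calc -a * x + b * y ≤ |a| * |x| + |b| * |y| :=
        add_le_add ((neg_mul a x ▸ neg_le_abs (a * x)).trans (abs_mul a x).le)
          ((le_abs_self _).trans (abs_mul b y).le)
    _ ≤ |a| + |b| :=
        add_le_add (mul_le_of_le_one_right (abs_nonneg a) hx)
          (mul_le_of_le_one_right (abs_nonneg b) hy)

section

variable {Ω : Type*} {m m0 : MeasurableSpace Ω} {μ : Measure Ω}

lemma ae_abs_le_one_of_mem_Icc {W : Ω → ℝ} (hW : ∀ᵐ ω ∂μ, W ω ∈ Set.Icc (0 : ℝ) 1) :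
    ∀ᵐ ω ∂μ, |W ω| ≤ 1 := by
  filter_upwards [hW] with ω hω using abs_le.2 ⟨by linarith [hω.1], hω.2⟩

lemma ae_exp_compensated_le (η : ℝ) {W : Ω → ℝ} (hW01 : ∀ᵐ ω ∂μ, W ω ∈ Set.Icc (0 : ℝ) 1) :
    ∀ᵐ ω ∂μ, exp (-η * W ω + (1 - exp (-η)) * μ[W | m] ω) ≤ exp (|η| + |1 - exp (-η)|) := by
  filter_upwards [ae_abs_le_one_of_mem_Icc hW01,
    ae_bdd_abs_condExp_of_ae_bdd_abs (m := m) (ae_abs_le_one_of_mem_Icc hW01)] with ω hW hE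
  exact exp_le_exp.2 (neg_mul_add_mul_le_abs_add_abs hW hE)

variable [IsFiniteMeasure μ]

lemma integrable_exp_of_ae_le {f : Ω → ℝ} (hf : AEStronglyMeasurable f μ) {C : ℝ}
    (hfC : ∀ᵐ ω ∂μ, f ω ≤ C) : Integrable (fun ω => exp (f ω)) μ :=
  .of_bound (continuous_exp.comp_aestronglyMeasurable hf) (exp C) <| by
    filter_upwards [hfC] with ω hω
    rw [norm_of_nonneg (exp_pos _).le]
    exact exp_le_exp.2 hω

lemma integrable_exp_neg_mul (η : ℝ) {W : Ω → ℝ} (hW : AEStronglyMeasurable W μ)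
    (hW01 : ∀ᵐ ω ∂μ, W ω ∈ Set.Icc (0 : ℝ) 1) : Integrable (fun ω => exp (-η * W ω)) μ :=
  integrable_exp_of_ae_le (hW.const_mul (-η)) (C := |η|) <| by
    filter_upwards [ae_abs_le_one_of_mem_Icc hW01] with ω hω
    simpa using neg_mul_add_mul_le_abs_add_abs (b := 0) hω hω

lemma condExp_exp_neg_mul_le (hm : m ≤ m0) (η : ℝ) {W : Ω → ℝ}
    (hW : AEStronglyMeasurable W μ) (hW01 : ∀ᵐ ω ∂μ, W ω ∈ Set.Icc (0 : ℝ) 1) :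
    μ[fun ω => exp (-η * W ω) | m] ≤ᵐ[μ] fun ω => exp (-(1 - exp (-η)) * μ[W | m] ω) := by
  set c := 1 - exp (-η)
  have hW_int : Integrable W μ := .of_bound hW 1 (ae_abs_le_one_of_mem_Icc hW01)
  have hlin_int : Integrable (fun ω => 1 - c * W ω) μ :=
    (integrable_const 1).sub (hW_int.const_mul c)
  have hmono : μ[fun ω => exp (-η * W ω) | m] ≤ᵐ[μ] μ[fun ω => 1 - c * W ω | m] :=
    condExp_mono (integrable_exp_neg_mul η hW hW01) hlin_int (by
      filter_upwards [hW01] with ω hω using exp_neg_mul_le_one_sub_mul η hω)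
  have hlin : μ[fun ω => 1 - c * W ω | m] =ᵐ[μ] fun ω => 1 - c * μ[W | m] ω := by
    have hsplit : (fun ω => 1 - c * W ω) = (fun _ => (1 : ℝ)) - c • W := rfl
    filter_upwards [condExp_sub (integrable_const 1) (hW_int.smul c) m, condExp_smul c W m]
      with ω hsub hsmul
    rw [hsplit, hsub, Pi.sub_apply, hsmul, condExp_const hm]
    rfl
  filter_upwards [hmono, hlin] with ω hmono hlin
  calc _ ≤ 1 - c * μ[W | m] ω := hlin ▸ hmono
    _ ≤ exp (-c * μ[W | m] ω) := by linarith [add_one_le_exp (-c * μ[W | m] ω)]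

lemma condExp_exp_compensated_le_one (hm : m ≤ m0) (η : ℝ) {W : Ω → ℝ}
    (hW : AEStronglyMeasurable W μ) (hW01 : ∀ᵐ ω ∂μ, W ω ∈ Set.Icc (0 : ℝ) 1) :
    μ[fun ω => exp (-η * W ω + (1 - exp (-η)) * μ[W | m] ω) | m] ≤ᵐ[μ] 1 := by
  set c := 1 - exp (-η)
  have hsplit : (fun ω => exp (-η * W ω + c * μ[W | m] ω))
      = (fun ω => exp (c * μ[W | m] ω)) * fun ω => exp (-η * W ω) := by
    funext ω
    rw [Pi.mul_apply, ← exp_add, add_comm]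
  have hcomp_bdd : ∀ᵐ ω ∂μ, ‖exp (c * μ[W | m] ω)‖ ≤ exp |c| := by
    filter_upwards [ae_bdd_abs_condExp_of_ae_bdd_abs (m := m) (ae_abs_le_one_of_mem_Icc hW01)]
      with ω hE
    rw [norm_of_nonneg (exp_pos _).le, exp_le_exp]
    simpa using neg_mul_add_mul_le_abs_add_abs (a := 0) hE hE
  rw [hsplit]
  filter_upwards [condExp_stronglyMeasurable_mul_of_bound hm
      (continuous_exp.comp_stronglyMeasurable (stronglyMeasurable_condExp.const_mul c))
      (integrable_exp_neg_mul η hW hW01) _ hcomp_bdd,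
    condExp_exp_neg_mul_le hm η hW hW01] with ω hpull hle
  calc _ = exp (c * μ[W | m] ω) * μ[fun ω => exp (-η * W ω) | m] ω := hpull
    _ ≤ exp (c * μ[W | m] ω) * exp (-c * μ[W | m] ω) :=
        mul_le_mul_of_nonneg_left hle (exp_pos _).le
    _ = 1 := by rw [← exp_add, neg_mul, add_neg_cancel, exp_zero]

lemma supermartingale_prod_Icc {ℱ : Filtration ℕ m0} {Z : ℕ → Ω → ℝ} {C : ℝ}
    (hZ : StronglyAdapted ℱ Z) (hZ0 : ∀ t ω, 0 ≤ Z t ω) (hZC : ∀ t, ∀ᵐ ω ∂μ, Z t ω ≤ C)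
    (hZ1 : ∀ t, μ[Z (t + 1) | ℱ t] ≤ᵐ[μ] 1) :
    Supermartingale (fun n ω => ∏ t ∈ Icc 1 n, Z t ω) ℱ μ := by
  set P : ℕ → Ω → ℝ := fun n ω => ∏ t ∈ Icc 1 n, Z t ω
  have hP0 : ∀ n ω, 0 ≤ P n ω := fun n ω => prod_nonneg fun t _ => hZ0 t ω
  have hP : StronglyAdapted ℱ P := fun n =>
    Finset.stronglyMeasurable_fun_prod _ fun t ht => (hZ t).mono (ℱ.mono (mem_Icc.1 ht).2)
  have hP_int : ∀ n, Integrable (P n) μ := fun n =>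
    .of_bound ((hP n).mono (ℱ.le n)).aestronglyMeasurable (C ^ n) <| by
      filter_upwards [ae_all_iff.2 hZC] with ω hω
      calc ‖P n ω‖ = P n ω := norm_of_nonneg (hP0 n ω)
        _ ≤ ∏ t ∈ Icc 1 n, C := prod_le_prod (fun t _ => hZ0 t ω) fun t _ => hω t
        _ = C ^ n := by rw [prod_const, Nat.card_Icc, Nat.add_sub_cancel]
  have hZ_int : ∀ t, Integrable (Z t) μ := fun t =>
    .of_bound ((hZ t).mono (ℱ.le t)).aestronglyMeasurable C <| by
      filter_upwards [hZC t] with ω hω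
      rwa [norm_of_nonneg (hZ0 t ω)]
  have hsucc : ∀ n, P (n + 1) = P n * Z (n + 1) := fun n => by
    funext ω
    exact prod_Icc_succ_top (Nat.le_add_left 1 n) _
  refine supermartingale_nat hP hP_int fun n => ?_
  rw [hsucc]
  filter_upwards [condExp_mul_of_stronglyMeasurable_left (hP n) (hsucc n ▸ hP_int (n + 1))
    (hZ_int (n + 1)), hZ1 n] with ω hpull hle
  calc _ = P n ω * μ[Z (n + 1) | ℱ n] ω := hpull
    _ ≤ P n ω * 1 := mul_le_mul_of_nonneg_left hle (hP0 n ω)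
    _ = P n ω := mul_one _

end

theorem stmt3_general {Ω : Type*} {m0 : MeasurableSpace Ω} (μ : Measure Ω) [IsProbabilityMeasure μ]
    (T : ℕ) (ℱ : Filtration ℕ m0) (W : ℕ → Ω → ℝ)
    (hadapted : Adapted ℱ W)
    (hbdd : ∀ t, ∀ᵐ ω ∂μ, W t ω ∈ Set.Icc (0 : ℝ) 1)
    (η : ℝ) :
    ∫ ω, ∏ t ∈ Finset.Icc 1 T,
        Real.exp (-η * W t ω + (1 - Real.exp (-η)) * (μ[W t | ℱ (t - 1)]) ω) ∂μ ≤ 1 := by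
  set Z : ℕ → Ω → ℝ := fun t ω => exp (-η * W t ω + (1 - exp (-η)) * μ[W t | ℱ (t - 1)] ω)
  have hW : ∀ t, AEStronglyMeasurable (W t) μ := fun t =>
    ((hadapted.stronglyAdapted t).mono (ℱ.le t)).aestronglyMeasurable
  have hZ : StronglyAdapted ℱ Z := fun t => continuous_exp.comp_stronglyMeasurable
    (((hadapted.stronglyAdapted t).const_mul (-η)).add
      ((stronglyMeasurable_condExp.mono (ℱ.mono (t.sub_le 1))).const_mul _))
  have hP : Supermartingale (fun n ω => ∏ t ∈ Icc 1 n, Z t ω) ℱ μ :=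
    supermartingale_prod_Icc hZ (fun t ω => (exp_pos _).le)
      (fun t => ae_exp_compensated_le η (hbdd t))
      (fun t => condExp_exp_compensated_le_one (ℱ.le t) η (hW (t + 1)) (hbdd (t + 1)))
  calc ∫ ω, ∏ t ∈ Icc 1 T, Z t ω ∂μ = ∫ ω, μ[fun ω => ∏ t ∈ Icc 1 T, Z t ω | ℱ 0] ω ∂μ :=
        (integral_condExp (ℱ.le 0)).symm
    _ ≤ ∫ ω, ∏ t ∈ Icc 1 0, Z t ω ∂μ :=
        integral_mono_ae integrable_condExp (hP.integrable 0) (hP.condExp_ae_le T.zero_le)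
    _ = 1 := by simp

/-- The exponential process `∏_{t=1}^T exp(-η W_t + (1 - e^{-η}) E[W_t | F_{t-1}])` has
expectation at most 1, for an adapted `[0,1]`-bounded process and `η ∈ (0,1]`. -/
theorem stmt3 {Ω : Type*} {m0 : MeasurableSpace Ω} (μ : Measure Ω) [IsProbabilityMeasure μ]
    (T : ℕ) (ℱ : Filtration ℕ m0) (W : ℕ → Ω → ℝ)
    (hadapted : Adapted ℱ W)
    (hbdd : ∀ t, ∀ᵐ ω ∂μ, W t ω ∈ Set.Icc (0 : ℝ) 1)
    (η : ℝ) (hη : η ∈ Set.Ioc (0 : ℝ) 1) :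
    ∫ ω, ∏ t ∈ Finset.Icc 1 T,
        Real.exp (-η * W t ω + (1 - Real.exp (-η)) * (μ[W t | ℱ (t - 1)]) ω) ∂μ ≤ 1 :=
  stmt3_general μ T ℱ W hadapted hbdd η
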